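/- arXiv:2207.03542 — 2 statements merged into one kernel-verified Lean document; each statement's English description precedes it below -/
import Mathlib

section
/- Suppose w⁰, w¹, w² are smooth functions vanishing (w¹, w²) or constant (w⁰ = c) on ∂Ω, satisfying -div[e^{-zφ}(D⁰∇w⁰)] = S, -div[e^{-zφ}(D¹∇w⁰ + D⁰∇w¹)] = 0, and -div[e^{-zφ}(D¹∇w¹ + ½ D⁰∇w²)] = 0 in Ω, with D⁰ symmetric positive semidefinite and D¹ symmetric. Then ∫_Ω e^{-zφ} ∇w² · D⁰ ∇w⁰ dx = 2 ∫_Ω e^{-zφ} ∇w¹ · D⁰ ∇w¹ dx ≥ 0. -/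
open MeasureTheory Matrix

noncomputable def grad {d : ℕ} (u : (Fin d → ℝ) → ℝ) (x : Fin d → ℝ) : Fin d → ℝ :=
  fun i => fderiv ℝ u x (Pi.single i 1)

noncomputable def dvg {d : ℕ} (F : (Fin d → ℝ) → (Fin d → ℝ)) (x : Fin d → ℝ) : ℝ :=
  ∑ i, fderiv ℝ (fun y => F y i) x (Pi.single i 1)


/-- 1-D divergence theorem on a bounded open set: if `g` is `C¹` and vanishes on the
frontier of a bounded open set `U ⊆ ℝ`, then `∫_U g' = 0`. -/
theorem oneDim (U : Set ℝ) (hU : IsOpen U) (hUb : Bornology.IsBounded U)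
    (g : ℝ → ℝ) (hg : ContDiff ℝ (⊤ : ℕ∞) g) (h0 : ∀ t ∈ frontier U, g t = 0) :
    ∫ t in U, deriv g t = 0 := by
  obtain ⟨R, hR⟩ := hUb.subset_ball_lt 0 0
  have hRU : ∀ x ∈ U, |x| < R := fun x hx => by
    simpa [Real.dist_eq] using Metric.mem_ball.1 (hR.2 hx)
  classical
  -- endpoints of the component of x
  set a : ℝ → ℝ := fun x => sSup (Uᶜ ∩ Set.Iic x) with ha
  set b : ℝ → ℝ := fun x => sInf (Uᶜ ∩ Set.Ici x) with hb
  have hane : ∀ x ∈ U, (Uᶜ ∩ Set.Iic x).Nonempty := by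
    intro x hx
    refine ⟨-(R + 1), fun h => ?_, ?_⟩
    · have h2 := hRU _ h
      rw [abs_neg, abs_of_nonneg (by linarith [hR.1] : (0:ℝ) ≤ R + 1)] at h2
      linarith
    · have := abs_lt.1 (hRU x hx); simp only [Set.mem_Iic]; linarith
  have hbne : ∀ x ∈ U, (Uᶜ ∩ Set.Ici x).Nonempty := by
    intro x hx
    refine ⟨R + 1, fun h => ?_, ?_⟩
    · have := hRU _ h
      have hR0 : (0:ℝ) ≤ R := le_trans (abs_nonneg x) (hRU x hx).le
      rw [abs_of_nonneg (by linarith)] at this; linarith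
    · have := abs_lt.1 (hRU x hx); simp only [Set.mem_Ici]; linarith
  have habdd : ∀ x : ℝ, BddAbove (Uᶜ ∩ Set.Iic x) := fun x =>
    ⟨x, fun y hy => hy.2⟩
  have hbbdd : ∀ x : ℝ, BddBelow (Uᶜ ∩ Set.Ici x) := fun x =>
    ⟨x, fun y hy => hy.2⟩
  have hclosed : IsClosed (Uᶜ) := hU.isClosed_compl
  have hamem : ∀ x ∈ U, a x ∈ Uᶜ ∧ a x ≤ x := by
    intro x hx
    have h1 : a x ∈ Uᶜ ∩ Set.Iic x :=
      (hclosed.inter isClosed_Iic).csSup_mem (hane x hx) (habdd x)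
    exact ⟨h1.1, h1.2⟩
  have hbmem : ∀ x ∈ U, b x ∈ Uᶜ ∧ x ≤ b x := by
    intro x hx
    have h1 : b x ∈ Uᶜ ∩ Set.Ici x :=
      (hclosed.inter isClosed_Ici).csInf_mem (hbne x hx) (hbbdd x)
    exact ⟨h1.1, h1.2⟩
  have halt : ∀ x ∈ U, a x < x := by
    intro x hx
    refine lt_of_le_of_ne (hamem x hx).2 (fun h => ?_)
    exact (hamem x hx).1 (by rw [h]; exact hx)
  have hblt : ∀ x ∈ U, x < b x := by
    intro x hx
    refine lt_of_le_of_ne (hbmem x hx).2 (fun h => ?_)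
    exact (hbmem x hx).1 (by rw [← h]; exact hx)
  have hsub : ∀ x ∈ U, Set.Ioo (a x) (b x) ⊆ U := by
    intro x hx t ht
    by_contra htU
    rcases le_or_gt t x with h | h
    · exact absurd (le_csSup (habdd x) ⟨htU, h⟩) (not_le.2 ht.1)
    · exact absurd (csInf_le (hbbdd x) ⟨htU, h.le⟩) (not_le.2 ht.2)
  have hafr : ∀ x ∈ U, a x ∈ frontier U := by
    intro x hx
    rw [frontier_eq_closure_inter_closure, hclosed.closure_eq]
    refine ⟨?_, (hamem x hx).1⟩
    have : a x ∈ closure (Set.Ioo (a x) (b x)) := by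
      rw [closure_Ioo (ne_of_lt (lt_trans (halt x hx) (hblt x hx)))]
      exact ⟨le_refl _, le_of_lt (lt_trans (halt x hx) (hblt x hx))⟩
    exact closure_mono (hsub x hx) this
  have hbfr : ∀ x ∈ U, b x ∈ frontier U := by
    intro x hx
    rw [frontier_eq_closure_inter_closure, hclosed.closure_eq]
    refine ⟨?_, (hbmem x hx).1⟩
    have : b x ∈ closure (Set.Ioo (a x) (b x)) := by
      rw [closure_Ioo (ne_of_lt (lt_trans (halt x hx) (hblt x hx)))]
      exact ⟨le_of_lt (lt_trans (halt x hx) (hblt x hx)), le_refl _⟩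
    exact closure_mono (hsub x hx) this
  -- components coincide
  have hcong : ∀ x ∈ U, ∀ x' ∈ Set.Ioo (a x) (b x), a x' = a x ∧ b x' = b x := by
    intro x hx x' hx'
    have hx'U : x' ∈ U := hsub x hx hx'
    constructor
    · apply le_antisymm
      · apply csSup_le (hane x' hx'U)
        rintro u ⟨huc, hu⟩
        by_contra hlt
        push_neg at hlt
        have : u ∈ Set.Ioo (a x) (b x) := ⟨hlt, lt_of_le_of_lt hu hx'.2⟩
        exact huc (hsub x hx this)
      · exact le_csSup (habdd x') ⟨(hamem x hx).1, hx'.1.le⟩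
    · apply le_antisymm
      · exact csInf_le (hbbdd x') ⟨(hbmem x hx).1, hx'.2.le⟩
      · apply le_csInf (hbne x' hx'U)
        rintro u ⟨huc, hu⟩
        by_contra hlt
        push_neg at hlt
        have : u ∈ Set.Ioo (a x) (b x) := ⟨lt_of_lt_of_le hx'.1 hu, hlt⟩
        exact huc (hsub x hx this)
  -- the countable set of components
  set V : Set (ℝ × ℝ) := (fun x => (a x, b x)) '' U with hV
  have hmemself : ∀ x ∈ U, x ∈ Set.Ioo (a x) (b x) := fun x hx =>
    ⟨halt x hx, hblt x hx⟩
  have hVcomp : ∀ p ∈ V, ∀ q ∈ Set.Ioo p.1 p.2, (a q, b q) = p := by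
    rintro p ⟨x, hx, rfl⟩ q hq
    have := hcong x hx q hq
    simp [this.1, this.2]
  have hVc : V.Countable := by
    have : ∀ p : ℝ × ℝ, ∃ q : ℚ, p ∈ V → (q : ℝ) ∈ Set.Ioo p.1 p.2 := by
      intro p
      by_cases hp : p ∈ V
      · obtain ⟨x, hx, rfl⟩ := hp
        obtain ⟨q, hq⟩ := exists_rat_btwn (lt_trans (halt x hx) (hblt x hx))
        exact ⟨q, fun _ => hq⟩
      · exact ⟨0, fun h => absurd h hp⟩
    choose f hf using this
    rw [← Set.countable_coe_iff]
    have hinj : Function.Injective (fun p : V => f p.1) := by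
      rintro ⟨p, hp⟩ ⟨p', hp'⟩ h
      simp only at h
      have h1 := hf p hp
      have h2 := hf p' hp'
      rw [h] at h1
      have e1 := hVcomp p hp _ h1
      have e2 := hVcomp p' hp' _ h2
      exact Subtype.ext (e1.symm.trans e2)
    exact hinj.countable
  have hUeq : U = ⋃ p ∈ V, Set.Ioo p.1 p.2 := by
    apply Set.eq_of_subset_of_subset
    · intro x hx
      exact Set.mem_biUnion ⟨x, hx, rfl⟩ (hmemself x hx)
    · intro t ht
      simp only [Set.mem_iUnion] at ht
      obtain ⟨p, hp, htp⟩ := ht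
      obtain ⟨x, hx, rfl⟩ := hp
      exact hsub x hx htp
  have hdisj : V.PairwiseDisjoint (fun p : ℝ × ℝ => Set.Ioo p.1 p.2) := by
    rintro p hp p' hp' hne
    rw [Function.onFun, Set.disjoint_left]
    intro q hq hq'
    exact hne ((hVcomp p hp q hq).symm.trans (hVcomp p' hp' q hq'))
  -- integrability
  have hderiv_cont : Continuous (deriv g) := hg.continuous_deriv (by simp)
  have hint : IntegrableOn (deriv g) U := by
    apply (hderiv_cont.integrableOn_Icc (a := -R) (b := R)).mono_set
    intro x hx
    exact ⟨(abs_lt.1 (hRU x hx)).1.le, (abs_lt.1 (hRU x hx)).2.le⟩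
  -- each component integral is zero
  have hcompzero : ∀ p ∈ V, ∫ t in Set.Ioo p.1 p.2, deriv g t = 0 := by
    rintro p ⟨x, hx, rfl⟩
    have hab : a x ≤ b x := le_of_lt (lt_trans (halt x hx) (hblt x hx))
    have : ∫ t in Set.Ioo (a x) (b x), deriv g t
        = ∫ t in (a x)..(b x), deriv g t := by
      rw [intervalIntegral.integral_of_le hab, ← MeasureTheory.integral_Ioc_eq_integral_Ioo]
    rw [this, intervalIntegral.integral_deriv_eq_sub
      (fun t _ => (hg.differentiable (by simp)) t)
      (hderiv_cont.intervalIntegrable _ _)]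
    rw [h0 _ (hafr x hx), h0 _ (hbfr x hx), sub_zero]
  -- combine
  haveI : Countable ↥V := hVc.to_subtype
  have hUeq2 : U = ⋃ p : V, Set.Ioo p.1.1 p.1.2 := by
    rw [hUeq, Set.iUnion_coe_set]
  rw [hUeq2, MeasureTheory.integral_iUnion (ι := ↥V)
    (s := fun p => Set.Ioo p.1.1 p.1.2) (fun p => measurableSet_Ioo)
    (fun p q hpq => hdisj p.2 q.2 (fun h => hpq (Subtype.ext h)))
    (by rw [← hUeq2]; exact hint)]
  calc (∑' p : V, ∫ t in Set.Ioo p.1.1 p.1.2, deriv g t)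
      = ∑' _p : V, (0:ℝ) := tsum_congr (fun p => hcompzero p.1 p.2)
    _ = 0 := tsum_zero

theorem contIntOn {d : ℕ} {Ω : Set (Fin d → ℝ)} (hb : Bornology.IsBounded Ω)
    {f : (Fin d → ℝ) → ℝ} (hf : Continuous f) : IntegrableOn f Ω := by
  have hc : IsCompact (closure Ω) :=
    Metric.isCompact_of_isClosed_isBounded isClosed_closure hb.closure
  exact (hf.continuousOn.integrableOn_compact hc).mono_set subset_closure

/-- Integral over a bounded open set of a single partial derivative of a smooth function
vanishing on the frontier is zero. -/
theorem divComp {d : ℕ} (Ω : Set (Fin d → ℝ)) (hΩ : IsOpen Ω)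
    (hb : Bornology.IsBounded Ω) (u : (Fin d → ℝ) → ℝ) (hu : ContDiff ℝ (⊤ : ℕ∞) u)
    (h0 : ∀ x ∈ frontier Ω, u x = 0) (i : Fin d) :
    ∫ x in Ω, fderiv ℝ u x (Pi.single i 1) = 0 := by
  obtain ⟨n, rfl⟩ := Nat.exists_eq_succ_of_ne_zero (Fin.pos i).ne'
  set f : (Fin (n+1) → ℝ) → ℝ := fun x => fderiv ℝ u x (Pi.single i 1) with hf
  have hfc : Continuous f := by
    have h1 : Continuous (fderiv ℝ u) := hu.continuous_fderiv (by simp)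
    exact (ContinuousLinearMap.apply ℝ ℝ (Pi.single i (1:ℝ))).continuous.comp h1
  have hmeas : MeasurableSet Ω := hΩ.measurableSet
  have hind : Integrable (Ω.indicator f) := (contIntOn hb hfc).integrable_indicator hmeas
  rw [← integral_indicator hmeas]
  have hmp := (MeasureTheory.volume_preserving_piFinSuccAbove (fun _ : Fin (n+1) => ℝ) i).symm
  set e := (MeasurableEquiv.piFinSuccAbove (fun _ : Fin (n+1) => ℝ) i).symm with he
  have htrans : ∫ x, Ω.indicator f x
      = ∫ p : ℝ × (Fin n → ℝ), Ω.indicator f (e p) :=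
    (hmp.integral_comp e.measurableEmbedding _).symm
  rw [htrans]
  have hint2 : Integrable (fun p : ℝ × (Fin n → ℝ) => Ω.indicator f (e p)) :=
    (hmp.integrable_comp_emb e.measurableEmbedding).2 hind
  rw [Measure.volume_eq_prod] at hint2 ⊢
  rw [MeasureTheory.integral_prod_symm _ hint2]
  have hinner : ∀ y : Fin n → ℝ, ∫ t : ℝ, Ω.indicator f (e (t, y)) = 0 := by
    intro y
    set ι : ℝ → (Fin (n+1) → ℝ) := fun t => i.insertNth t y with hι
    have hesymm : ∀ t, e (t, y) = ι t := fun t => rfl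
    have hιc : Continuous ι :=
      Continuous.finInsertNth (A := fun _ : Fin (n+1) => ℝ) i continuous_id continuous_const
    set U : Set ℝ := ι ⁻¹' Ω with hUdef
    have hUopen : IsOpen U := hΩ.preimage hιc
    have hUb : Bornology.IsBounded U := by
      obtain ⟨R, hR⟩ := hb.exists_norm_le
      rw [isBounded_iff_forall_norm_le]
      refine ⟨R, fun t ht => ?_⟩
      have h1 : ‖ι t‖ ≤ R := hR _ ht
      have h2 : |t| ≤ ‖ι t‖ := by
        simpa [hι, Fin.insertNth_apply_same] using norm_le_pi_norm (ι t) i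
      rw [Real.norm_eq_abs]
      exact le_trans h2 h1
    -- ι is an affine map with derivative `Pi.single i 1`
    set v : Fin (n+1) → ℝ := Pi.single i 1 with hv
    have haff : ∀ t, ι t = i.insertNth 0 y + t • v := by
      intro t
      funext j
      rcases eq_or_ne j i with rfl | hne
      · simp [hι, hv, Fin.insertNth_apply_same]
      · obtain ⟨k, rfl⟩ := Fin.exists_succAbove_eq hne
        simp [hι, hv, Fin.insertNth_apply_succAbove,
          Pi.single_eq_of_ne (Fin.succAbove_ne i k)]
    have hιd : ∀ t, HasDerivAt ι v t := by
      intro t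
      rw [show ι = fun t => i.insertNth 0 y + t • v from funext haff]
      simpa using ((hasDerivAt_id t).smul_const v).const_add (i.insertNth 0 y)
    have hιsm : ContDiff ℝ (⊤ : ℕ∞) ι := by
      rw [show ι = fun t => i.insertNth 0 y + t • v from funext haff]
      exact contDiff_const.add (contDiff_id.smul contDiff_const)
    set g : ℝ → ℝ := fun t => u (ι t) with hg
    have hgsm : ContDiff ℝ (⊤ : ℕ∞) g := hu.comp hιsm
    have hder : ∀ t, HasDerivAt g (f (ι t)) t := by
      intro t
      exact ((hu.differentiable (by simp) (ι t)).hasFDerivAt).comp_hasDerivAt t (hιd t)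
    have hfront : ∀ t ∈ frontier U, g t = 0 := by
      intro t ht
      have h1 : ι t ∈ closure Ω := hιc.closure_preimage_subset Ω
        (by rw [hUopen.frontier_eq] at ht; exact ht.1)
      have h2 : ι t ∉ Ω := by
        rw [hUopen.frontier_eq] at ht; exact ht.2
      have : ι t ∈ frontier Ω := by
        rw [frontier_eq_closure_inter_closure]
        exact ⟨h1, subset_closure h2⟩
      exact h0 _ this
    have h1d := oneDim U hUopen hUb g hgsm hfront
    have hcongr : ∀ t : ℝ, Ω.indicator f (e (t, y)) = U.indicator (fun t => deriv g t) t := by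
      intro t
      rw [hesymm t]
      by_cases htU : t ∈ U
      · have htΩ : ι t ∈ Ω := htU
        simp only [Set.indicator_of_mem htU, Set.indicator_of_mem htΩ]
        exact ((hder t).deriv).symm
      · have htΩ : ι t ∉ Ω := htU
        simp only [Set.indicator_of_notMem htU, Set.indicator_of_notMem htΩ]
    rw [show (fun t : ℝ => Ω.indicator f (e (t, y)))
        = U.indicator (fun t => deriv g t) from funext hcongr]
    rw [integral_indicator hUopen.measurableSet]
    exact h1d
  rw [show (fun y => ∫ t : ℝ, Ω.indicator f (e (t, y))) = fun _ => (0:ℝ) from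
    funext hinner]
  simp


/-- Divergence theorem on a bounded open set for a smooth vector field vanishing on the
frontier. -/
theorem divZero {d : ℕ} (Ω : Set (Fin d → ℝ)) (hΩ : IsOpen Ω)
    (hb : Bornology.IsBounded Ω) (G : (Fin d → ℝ) → (Fin d → ℝ))
    (hG : ∀ i, ContDiff ℝ (⊤ : ℕ∞) fun x => G x i)
    (h0 : ∀ x ∈ frontier Ω, G x = 0) :
    ∫ x in Ω, dvg G x = 0 := by
  have hGi0 : ∀ (i : Fin d), ∀ x ∈ frontier Ω, G x i = 0 := fun i x hx => by
    rw [h0 x hx]; rfl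
  have hint : ∀ i : Fin d,
      IntegrableOn (fun x => fderiv ℝ (fun y => G y i) x (Pi.single i 1)) Ω := by
    intro i
    apply contIntOn hb
    exact (ContinuousLinearMap.apply ℝ ℝ (Pi.single i (1:ℝ))).continuous.comp
      ((hG i).continuous_fderiv (by simp))
  have : ∫ x in Ω, dvg G x
      = ∑ i : Fin d, ∫ x in Ω, fderiv ℝ (fun y => G y i) x (Pi.single i 1) := by
    simp only [dvg]
    exact MeasureTheory.integral_finset_sum _ (fun i _ => hint i)
  rw [this]
  refine Finset.sum_eq_zero fun i _ => ?_
  exact divComp Ω hΩ hb (fun y => G y i) (hG i) (hGi0 i) i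

/-- smoothness of a component of the gradient -/
theorem grad_smooth {d : ℕ} {w : (Fin d → ℝ) → ℝ} (hw : ContDiff ℝ (⊤ : ℕ∞) w) (i : Fin d) :
    ContDiff ℝ (⊤ : ℕ∞) fun x => grad w x i := by
  have h1 : ContDiff ℝ (⊤ : ℕ∞) (fderiv ℝ w) := hw.fderiv_right (by simp)
  exact (ContinuousLinearMap.apply ℝ ℝ (Pi.single i (1:ℝ))).contDiff.comp h1

/-- product rule for divergence -/
theorem dvg_smul {d : ℕ} (u : (Fin d → ℝ) → ℝ) (F : (Fin d → ℝ) → (Fin d → ℝ))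
    (hu : ContDiff ℝ (⊤ : ℕ∞) u) (hF : ∀ i, ContDiff ℝ (⊤ : ℕ∞) fun x => F x i) (x : Fin d → ℝ) :
    dvg (fun y => u y • F y) x = grad u x ⬝ᵥ F x + u x * dvg F x := by
  have key : ∀ i : Fin d, fderiv ℝ (fun y => (u y • F y) i) x (Pi.single i 1)
      = fderiv ℝ u x (Pi.single i 1) * F x i
        + u x * fderiv ℝ (fun y => F y i) x (Pi.single i 1) := by
    intro i
    have h1 : (fun y => (u y • F y) i) = fun y => u y * F y i := rfl
    rw [h1, fderiv_fun_mul (hu.differentiable (by simp) x)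
      ((hF i).differentiable (by simp) x)]
    simp [ContinuousLinearMap.add_apply, ContinuousLinearMap.smul_apply, smul_eq_mul]
    ring
  simp only [dvg, grad, dotProduct, key]
  rw [Finset.sum_add_distrib, Finset.mul_sum]

/-- Integration by parts pairing: if `div F = 0` on `Ω` and `u = 0` on the frontier, then
`∫_Ω ∇u ⬝ F = 0`. -/
theorem pairing {d : ℕ} (Ω : Set (Fin d → ℝ)) (hΩ : IsOpen Ω)
    (hb : Bornology.IsBounded Ω) (u : (Fin d → ℝ) → ℝ) (F : (Fin d → ℝ) → (Fin d → ℝ))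
    (hu : ContDiff ℝ (⊤ : ℕ∞) u) (hF : ∀ i, ContDiff ℝ (⊤ : ℕ∞) fun x => F x i)
    (hu0 : ∀ x ∈ frontier Ω, u x = 0) (hdiv : ∀ x ∈ Ω, dvg F x = 0) :
    ∫ x in Ω, grad u x ⬝ᵥ F x = 0 := by
  have hG : ∀ i, ContDiff ℝ (⊤ : ℕ∞) fun x => (u x • F x) i := fun i => hu.mul (hF i)
  have h0 : ∀ x ∈ frontier Ω, (fun y => u y • F y) x = 0 := fun x hx => by
    simp only [hu0 x hx, zero_smul]
  have hz := divZero Ω hΩ hb _ hG h0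
  have hcong : ∀ x ∈ Ω, grad u x ⬝ᵥ F x = dvg (fun y => u y • F y) x := by
    intro x hx
    rw [dvg_smul u F hu hF x, hdiv x hx, mul_zero, add_zero]
  rw [setIntegral_congr_fun hΩ.measurableSet hcong]
  exact hz

theorem symm_dot {d : ℕ} (M : Matrix (Fin d) (Fin d) ℝ) (hM : M.IsSymm)
    (v w : Fin d → ℝ) : v ⬝ᵥ (M *ᵥ w) = w ⬝ᵥ (M *ᵥ v) := by
  rw [Matrix.dotProduct_mulVec, ← Matrix.mulVec_transpose, hM.eq, dotProduct_comm]


theorem mulVec_smooth {d : ℕ} {M : (Fin d → ℝ) → Matrix (Fin d) (Fin d) ℝ}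
    (hM : ∀ i j, ContDiff ℝ (⊤ : ℕ∞) fun x => M x i j) {G : (Fin d → ℝ) → (Fin d → ℝ)}
    (hG : ∀ j, ContDiff ℝ (⊤ : ℕ∞) fun x => G x j) (i : Fin d) :
    ContDiff ℝ (⊤ : ℕ∞) fun x => (M x *ᵥ G x) i := by
  have h : (fun x => (M x *ᵥ G x) i) = fun x => ∑ j, M x i j * G x j := by
    funext x; simp [Matrix.mulVec, dotProduct]
  rw [h]
  exact ContDiff.sum fun j _ => (hM i j).mul (hG j)

theorem dot_smooth {d : ℕ} {v G : (Fin d → ℝ) → (Fin d → ℝ)}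
    (hv : ∀ i, ContDiff ℝ (⊤ : ℕ∞) fun x => v x i) (hG : ∀ i, ContDiff ℝ (⊤ : ℕ∞) fun x => G x i) :
    ContDiff ℝ (⊤ : ℕ∞) fun x => v x ⬝ᵥ G x := by
  have h : (fun x => v x ⬝ᵥ G x) = fun x => ∑ i, v x i * G x i := by
    funext x; simp [dotProduct]
  rw [h]
  exact ContDiff.sum fun i _ => (hv i).mul (hG i)


/-- convexity of the Joule-heating energy: second-variation identity. -/
theorem stmt7 {d : ℕ} (Ω : Set (Fin d → ℝ)) (hΩopen : IsOpen Ω)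
    (hΩbdd : Bornology.IsBounded Ω) (z c : ℝ)
    (φ w0 w1 w2 S : (Fin d → ℝ) → ℝ)
    (D0 D1 : (Fin d → ℝ) → Matrix (Fin d) (Fin d) ℝ)
    (hφ : ContDiff ℝ (⊤ : ℕ∞) φ) (hφbc : ∀ x ∈ frontier Ω, φ x = 0)
    (hw0 : ContDiff ℝ (⊤ : ℕ∞) w0) (hw1 : ContDiff ℝ (⊤ : ℕ∞) w1) (hw2 : ContDiff ℝ (⊤ : ℕ∞) w2)
    (hD0s : ∀ i j, ContDiff ℝ (⊤ : ℕ∞) fun x => D0 x i j)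
    (hD1s : ∀ i j, ContDiff ℝ (⊤ : ℕ∞) fun x => D1 x i j)
    (hD0symm : ∀ x, (D0 x).IsSymm)
    (hD0psd : ∀ x (ξ : Fin d → ℝ), 0 ≤ ξ ⬝ᵥ (D0 x *ᵥ ξ))
    (hD1symm : ∀ x, (D1 x).IsSymm)
    (hbc0 : ∀ x ∈ frontier Ω, w0 x = c)
    (hbc1 : ∀ x ∈ frontier Ω, w1 x = 0)
    (hbc2 : ∀ x ∈ frontier Ω, w2 x = 0)
    (hpde0 : ∀ x ∈ Ω,
      -dvg (fun y => Real.exp (-(z * φ y)) • (D0 y *ᵥ grad w0 y)) x = S x)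
    (hpde1 : ∀ x ∈ Ω,
      -dvg (fun y => Real.exp (-(z * φ y)) •
        (D1 y *ᵥ grad w0 y + D0 y *ᵥ grad w1 y)) x = 0)
    (hpde2 : ∀ x ∈ Ω,
      -dvg (fun y => Real.exp (-(z * φ y)) •
        (D1 y *ᵥ grad w1 y + (1 / 2 : ℝ) • (D0 y *ᵥ grad w2 y))) x = 0) :
    (∫ x in Ω, Real.exp (-(z * φ x)) * (grad w2 x ⬝ᵥ (D0 x *ᵥ grad w0 x)))
      = 2 * ∫ x in Ω, Real.exp (-(z * φ x)) * (grad w1 x ⬝ᵥ (D0 x *ᵥ grad w1 x)) ∧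
    0 ≤ 2 * ∫ x in Ω, Real.exp (-(z * φ x)) * (grad w1 x ⬝ᵥ (D0 x *ᵥ grad w1 x)) := by
  classical
  have hEs : ContDiff ℝ (⊤ : ℕ∞) fun x => Real.exp (-(z * φ x)) :=
    Real.contDiff_exp.comp (contDiff_const.mul hφ).neg
  -- smoothness of the vector fields
  have hF1s : ∀ i, ContDiff ℝ (⊤ : ℕ∞) fun x =>
      (Real.exp (-(z * φ x)) • (D1 x *ᵥ grad w0 x + D0 x *ᵥ grad w1 x)) i := by
    intro i
    have h : (fun x => (Real.exp (-(z * φ x)) •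
        (D1 x *ᵥ grad w0 x + D0 x *ᵥ grad w1 x)) i)
        = fun x => Real.exp (-(z * φ x)) *
          ((D1 x *ᵥ grad w0 x) i + (D0 x *ᵥ grad w1 x) i) := rfl
    rw [h]
    exact hEs.mul ((mulVec_smooth hD1s (grad_smooth hw0) i).add
      (mulVec_smooth hD0s (grad_smooth hw1) i))
  have hF2s : ∀ i, ContDiff ℝ (⊤ : ℕ∞) fun x =>
      (Real.exp (-(z * φ x)) •
        (D1 x *ᵥ grad w1 x + (1 / 2 : ℝ) • (D0 x *ᵥ grad w2 x))) i := by
    intro i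
    have h : (fun x => (Real.exp (-(z * φ x)) •
        (D1 x *ᵥ grad w1 x + (1 / 2 : ℝ) • (D0 x *ᵥ grad w2 x))) i)
        = fun x => Real.exp (-(z * φ x)) *
          ((D1 x *ᵥ grad w1 x) i + (1 / 2 : ℝ) * (D0 x *ᵥ grad w2 x) i) := rfl
    rw [h]
    exact hEs.mul ((mulVec_smooth hD1s (grad_smooth hw1) i).add
      (contDiff_const.mul (mulVec_smooth hD0s (grad_smooth hw2) i)))
  -- pairing with w1 and the first-order field
  have hP1 : ∫ x in Ω, grad w1 x ⬝ᵥ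
      (Real.exp (-(z * φ x)) • (D1 x *ᵥ grad w0 x + D0 x *ᵥ grad w1 x)) = 0 :=
    pairing Ω hΩopen hΩbdd w1 _ hw1 hF1s hbc1
      (fun x hx => neg_eq_zero.mp (hpde1 x hx))
  -- pairing with w0 - c and the second-order field
  have hgradsub : grad (fun y => w0 y - c) = grad w0 := by
    funext x i
    simp only [grad, fderiv_sub_const]
  have hP2 : ∫ x in Ω, grad w0 x ⬝ᵥ
      (Real.exp (-(z * φ x)) •
        (D1 x *ᵥ grad w1 x + (1 / 2 : ℝ) • (D0 x *ᵥ grad w2 x))) = 0 := by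
    have h := pairing Ω hΩopen hΩbdd (fun y => w0 y - c) _
      (hw0.sub contDiff_const) hF2s
      (fun x hx => by show w0 x - c = 0; rw [hbc0 x hx, sub_self])
      (fun x hx => neg_eq_zero.mp (hpde2 x hx))
    rwa [hgradsub] at h
  -- named integrands
  set A : (Fin d → ℝ) → ℝ :=
    fun x => Real.exp (-(z * φ x)) * (grad w0 x ⬝ᵥ (D1 x *ᵥ grad w1 x)) with hA
  set B : (Fin d → ℝ) → ℝ :=
    fun x => Real.exp (-(z * φ x)) * (grad w0 x ⬝ᵥ (D0 x *ᵥ grad w2 x)) with hB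
  set C : (Fin d → ℝ) → ℝ :=
    fun x => Real.exp (-(z * φ x)) * (grad w1 x ⬝ᵥ (D1 x *ᵥ grad w0 x)) with hC
  set J : (Fin d → ℝ) → ℝ :=
    fun x => Real.exp (-(z * φ x)) * (grad w1 x ⬝ᵥ (D0 x *ᵥ grad w1 x)) with hJ
  have hIA : IntegrableOn A Ω := contIntOn hΩbdd
    (hEs.mul (dot_smooth (grad_smooth hw0) (mulVec_smooth hD1s (grad_smooth hw1)))).continuous
  have hIB : IntegrableOn B Ω := contIntOn hΩbdd
    (hEs.mul (dot_smooth (grad_smooth hw0) (mulVec_smooth hD0s (grad_smooth hw2)))).continuous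
  have hIC : IntegrableOn C Ω := contIntOn hΩbdd
    (hEs.mul (dot_smooth (grad_smooth hw1) (mulVec_smooth hD1s (grad_smooth hw0)))).continuous
  have hIJ : IntegrableOn J Ω := contIntOn hΩbdd
    (hEs.mul (dot_smooth (grad_smooth hw1) (mulVec_smooth hD0s (grad_smooth hw1)))).continuous
  -- expand the pairings
  have hexp2 : ∀ x, grad w0 x ⬝ᵥ
      (Real.exp (-(z * φ x)) •
        (D1 x *ᵥ grad w1 x + (1 / 2 : ℝ) • (D0 x *ᵥ grad w2 x)))
      = A x + (1 / 2 : ℝ) * B x := by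
    intro x
    simp only [hA, hB, dotProduct, Pi.smul_apply, Pi.add_apply, smul_eq_mul,
      Finset.mul_sum]
    rw [← Finset.sum_add_distrib]
    exact Finset.sum_congr rfl fun i _ => by ring
  have hexp1 : ∀ x, grad w1 x ⬝ᵥ
      (Real.exp (-(z * φ x)) • (D1 x *ᵥ grad w0 x + D0 x *ᵥ grad w1 x))
      = C x + J x := by
    intro x
    simp only [hC, hJ, dotProduct, Pi.smul_apply, Pi.add_apply, smul_eq_mul,
      Finset.mul_sum]
    rw [← Finset.sum_add_distrib]
    exact Finset.sum_congr rfl fun i _ => by ring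
  rw [show (fun x => grad w0 x ⬝ᵥ
      (Real.exp (-(z * φ x)) •
        (D1 x *ᵥ grad w1 x + (1 / 2 : ℝ) • (D0 x *ᵥ grad w2 x))))
      = fun x => A x + (1 / 2 : ℝ) * B x from funext hexp2] at hP2
  rw [show (fun x => grad w1 x ⬝ᵥ
      (Real.exp (-(z * φ x)) • (D1 x *ᵥ grad w0 x + D0 x *ᵥ grad w1 x)))
      = fun x => C x + J x from funext hexp1] at hP1
  rw [MeasureTheory.integral_add hIA (hIB.const_mul _),
    integral_const_mul] at hP2
  rw [MeasureTheory.integral_add hIC hIJ] at hP1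
  -- symmetry identities
  have hAC : ∫ x in Ω, A x = ∫ x in Ω, C x := by
    congr 1
    funext x
    simp only [hA, hC, symm_dot (D1 x) (hD1symm x)]
  have hBgoal : (∫ x in Ω, Real.exp (-(z * φ x)) * (grad w2 x ⬝ᵥ (D0 x *ᵥ grad w0 x)))
      = ∫ x in Ω, B x := by
    congr 1
    funext x
    simp only [hB, symm_dot (D0 x) (hD0symm x)]
  have hnn : 0 ≤ ∫ x in Ω, J x := by
    apply MeasureTheory.setIntegral_nonneg hΩopen.measurableSet
    intro x _
    exact mul_nonneg (Real.exp_pos _).le (hD0psd x _)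
  constructor
  · rw [hBgoal]; linarith
  · linarith
end

section
/- If Φ : ℝ → ℝ is convex and differentiable with Φ'(c) = 0, and u : Ω → ℝ, S : Ω → ℝ are such that the sign condition S(x)(u(x) - c) ≥ 0 does not necessarily hold, it is still true that S(x)Φ'(u(x)) and S(x) may differ in sign, but under the PDE constraint -div(D∇u) = S with u = c on ∂Ω and D positive semidefinite, ∫_Ω S Φ'(u) dx ≥ 0. -/
open MeasureTheory Matrix intervalIntegral Real Set

theorem div_integral_zero {d : ℕ} (W : (Fin d → ℝ) → (Fin d → ℝ))
    (W' : (Fin d → ℝ) → ((Fin d → ℝ) →L[ℝ] (Fin d → ℝ)))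
    (hW : ∀ x, HasFDerivAt W (W' x) x)
    {K : Set (Fin d → ℝ)} (hK : IsCompact K) (h0 : ∀ x ∉ K, W x = 0)
    (Hi : Integrable (fun x => ∑ i, W' x (Pi.single i 1) i)) :
    ∫ x, ∑ i, W' x (Pi.single i 1) i = 0 := by
  -- W' vanishes off K
  have hW'0 : ∀ x ∉ K, W' x = 0 := by
    intro x hx
    have hopen : IsOpen Kᶜ := hK.isClosed.isOpen_compl
    have h1 : HasFDerivAt W (0 : (Fin d → ℝ) →L[ℝ] (Fin d → ℝ)) x := by
      have heq : W =ᶠ[nhds x] (fun _ => 0) :=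
        Filter.eventuallyEq_of_mem (hopen.mem_nhds hx) (fun y hy => h0 y hy)
      exact (hasFDerivAt_const (0 : Fin d → ℝ) x).congr_of_eventuallyEq heq
    exact (hW x).unique h1
  cases d with
  | zero => simp
  | succ n =>
    obtain ⟨R, hR0, hRK⟩ : ∃ R : ℝ, 0 ≤ R ∧ K ⊆ Metric.closedBall 0 R := by
      obtain ⟨R, hRK⟩ := hK.isBounded.subset_closedBall 0
      exact ⟨max R 0, le_max_right _ _, hRK.trans (Metric.closedBall_subset_closedBall (le_max_left _ _))⟩
    set a : Fin (n+1) → ℝ := fun _ => -(R+1) with ha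
    set b : Fin (n+1) → ℝ := fun _ => (R+1) with hb
    have hle : a ≤ b := fun i => by simp [ha, hb]; linarith
    have hIccK : K ⊆ Icc a b := by
      intro x hx
      have : ‖x‖ ≤ R := by simpa using hRK hx
      constructor <;> intro i <;>
        have := (abs_le.mp ((norm_le_pi_norm x i).trans this)) <;>
        simp [ha, hb] <;> linarith [this.1, this.2]
    have key := integral_divergence_of_hasFDerivAt_off_countable (a := a) (b := b) hle
      W W' ∅ countable_empty (Continuous.continuousOn (by
        exact continuous_iff_continuousAt.mpr fun x => (hW x).continuousAt))
      (fun x _ => hW x) Hi.integrableOn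
    have hfaces : ∀ (i : Fin (n+1)) (c : ℝ), |c| = R + 1 →
        ∀ y : Fin n → ℝ, W (Fin.insertNth (α := fun _ => ℝ) i c y) = 0 := by
      intro i c hc y
      apply h0
      intro hmem
      have h1 : ‖Fin.insertNth (α := fun _ => ℝ) i c y‖ ≤ R := by simpa using hRK hmem
      have h2 : |(Fin.insertNth (α := fun _ => ℝ) i c y) i| ≤ ‖Fin.insertNth (α := fun _ => ℝ) i c y‖ := by
        simpa [Real.norm_eq_abs] using norm_le_pi_norm (Fin.insertNth (α := fun _ => ℝ) i c y) i
      rw [Fin.insertNth_apply_same, hc] at h2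
      linarith [h2.trans h1]
    rw [Finset.sum_eq_zero] at key
    · rw [← key, ← setIntegral_eq_integral_of_forall_compl_eq_zero
        (s := Icc a b) (fun x hx => by
          have : x ∉ K := fun h => hx (hIccK h)
          simp [hW'0 x this])]
    · intro i _
      have h1 : ∀ y : Fin n → ℝ, W (Fin.insertNth (α := fun _ => ℝ) i (b i) y) i = 0 := fun y => by
        rw [hfaces i (b i) (by show |(R+1:ℝ)| = R+1; exact abs_of_nonneg (by linarith)) y]; rfl
      have h2 : ∀ y : Fin n → ℝ, W (Fin.insertNth (α := fun _ => ℝ) i (a i) y) i = 0 := fun y => by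
        rw [hfaces i (a i) (by show |(-(R+1):ℝ)| = R+1; rw [abs_neg]; exact abs_of_nonneg (by linarith)) y]; rfl
      simp [h1, h2]

noncomputable def qcut (δ t : ℝ) : ℝ :=
  Real.smoothTransition ((t - 2*δ)/δ) + Real.smoothTransition ((-t - 2*δ)/δ)

noncomputable def rcut (δ s : ℝ) : ℝ := ∫ t in (0:ℝ)..s, qcut δ t

theorem qcut_contDiff {δ : ℝ} : ContDiff ℝ (⊤ : ℕ∞) (qcut δ) := by
  have h1 : ContDiff ℝ (⊤ : ℕ∞) fun t : ℝ => (t - 2*δ)/δ := (contDiff_id.sub contDiff_const).div_const δ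
  have h2 : ContDiff ℝ (⊤ : ℕ∞) fun t : ℝ => (-t - 2*δ)/δ :=
    ((contDiff_id (E := ℝ)).neg.sub contDiff_const).div_const δ
  exact (Real.smoothTransition.contDiff.comp h1).add (Real.smoothTransition.contDiff.comp h2)

theorem qcut_continuous (δ : ℝ) : Continuous (qcut δ) := qcut_contDiff.continuous

theorem qcut_nonneg (δ t : ℝ) : 0 ≤ qcut δ t :=
  add_nonneg (Real.smoothTransition.nonneg _) (Real.smoothTransition.nonneg _)

theorem qcut_le_one {δ : ℝ} (hδ : 0 < δ) (t : ℝ) : qcut δ t ≤ 1 := by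
  unfold qcut
  rcases le_or_gt t 0 with h | h
  · rw [Real.smoothTransition.zero_of_nonpos
      (div_nonpos_of_nonpos_of_nonneg (by linarith) hδ.le), zero_add]
    exact Real.smoothTransition.le_one _
  · rw [Real.smoothTransition.zero_of_nonpos
      (div_nonpos_of_nonpos_of_nonneg (a := -t - 2*δ) (by linarith) hδ.le), add_zero]
    exact Real.smoothTransition.le_one _

theorem qcut_eq_zero {δ t : ℝ} (hδ : 0 < δ) (h : |t| ≤ 2*δ) : qcut δ t = 0 := by
  rw [abs_le] at h
  unfold qcut
  rw [Real.smoothTransition.zero_of_nonpos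
      (div_nonpos_of_nonpos_of_nonneg (by linarith [h.2]) hδ.le),
    Real.smoothTransition.zero_of_nonpos
      (div_nonpos_of_nonpos_of_nonneg (by linarith [h.1]) hδ.le), add_zero]

theorem qcut_eq_one {δ t : ℝ} (hδ : 0 < δ) (h : 3*δ ≤ |t|) : qcut δ t = 1 := by
  unfold qcut
  rcases le_abs.mp h with h | h
  · rw [Real.smoothTransition.one_of_one_le (by rw [le_div_iff₀ hδ]; linarith),
      Real.smoothTransition.zero_of_nonpos
        (div_nonpos_of_nonpos_of_nonneg (by linarith) hδ.le), add_zero]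
  · rw [Real.smoothTransition.zero_of_nonpos
        (div_nonpos_of_nonpos_of_nonneg (by linarith) hδ.le),
      Real.smoothTransition.one_of_one_le (by rw [le_div_iff₀ hδ]; linarith), zero_add]

theorem qcut_intervalIntegrable (δ a b : ℝ) : IntervalIntegrable (qcut δ) volume a b :=
  (qcut_continuous δ).intervalIntegrable a b

theorem rcut_hasDerivAt {δ : ℝ} (s : ℝ) : HasDerivAt (rcut δ) (qcut δ s) s :=
  (intervalIntegral.integral_hasStrictDerivAt_right (qcut_intervalIntegrable δ 0 s)
    ((qcut_continuous δ).stronglyMeasurableAtFilter _ _)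
    (qcut_continuous δ).continuousAt).hasDerivAt

theorem rcut_contDiff {δ : ℝ} : ContDiff ℝ (⊤ : ℕ∞) (rcut δ) := by
  rw [contDiff_infty_iff_deriv]
  have hd : deriv (rcut δ) = qcut δ := funext fun s => (rcut_hasDerivAt s).deriv
  refine ⟨fun s => (rcut_hasDerivAt s).differentiableAt, ?_⟩
  rw [hd]
  exact qcut_contDiff

theorem abs_rcut_le {δ : ℝ} (hδ : 0 < δ) (s : ℝ) : |rcut δ s| ≤ |s| := by
  have := intervalIntegral.norm_integral_le_of_norm_le_const
    (C := 1) (f := qcut δ) (a := 0) (b := s) ?_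
  · simpa [rcut] using this
  · intro x _
    rw [Real.norm_eq_abs, abs_of_nonneg (qcut_nonneg δ x)]
    exact qcut_le_one hδ x

theorem rcut_eq_zero {δ s : ℝ} (hδ : 0 < δ) (h : |s| ≤ 2*δ) : rcut δ s = 0 := by
  unfold rcut
  have hcong : ∀ t ∈ Set.uIcc (0:ℝ) s, qcut δ t = (fun _ : ℝ => (0:ℝ)) t := by
    intro t ht
    rcases Set.mem_uIcc.mp ht with ⟨h1, h2⟩ | ⟨h1, h2⟩
    · exact qcut_eq_zero hδ (by rw [abs_of_nonneg h1]; exact (h2.trans (le_abs_self s)).trans h)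
    · exact qcut_eq_zero hδ (by rw [abs_of_nonpos h2]
                                exact ((neg_le_neg h1).trans (neg_le_abs s)).trans h)
  rw [intervalIntegral.integral_congr hcong, intervalIntegral.integral_zero]

theorem abs_rcut_sub_le {δ : ℝ} (hδ : 0 < δ) (s : ℝ) : |rcut δ s - s| ≤ 3*δ := by
  set f : ℝ → ℝ := fun t => qcut δ t - 1 with hf
  have hfc : Continuous f := (qcut_continuous δ).sub continuous_const
  have hfi : ∀ a b : ℝ, IntervalIntegrable f volume a b := fun a b => hfc.intervalIntegrable a b
  have hbound : ∀ t, ‖f t‖ ≤ 1 := by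
    intro t
    have h0 := qcut_nonneg δ t
    have h1 := qcut_le_one hδ t
    rw [Real.norm_eq_abs, abs_le]
    exact ⟨by simp [hf]; linarith, by simp [hf]; linarith⟩
  have hrepr : rcut δ s - s = ∫ t in (0:ℝ)..s, f t := by
    rw [hf, intervalIntegral.integral_sub (qcut_intervalIntegrable δ 0 s)
      intervalIntegrable_const]
    simp [rcut]
  have hone : ∀ t : ℝ, 3*δ ≤ |t| → f t = 0 := fun t ht => by
    simp [hf, qcut_eq_one hδ ht]
  rw [hrepr]
  by_cases hs : |s| ≤ 3*δ
  · have := intervalIntegral.norm_integral_le_of_norm_le_const (C := 1)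
      (f := f) (a := 0) (b := s) (fun x _ => hbound x)
    rw [Real.norm_eq_abs] at this
    simpa using this.trans (by simpa using hs)
  · rcases lt_abs.mp (not_le.mp hs) with h | h
    · have hsplit := intervalIntegral.integral_add_adjacent_intervals
        (a := (0:ℝ)) (b := 3*δ) (c := s) (hfi 0 (3*δ)) (hfi (3*δ) s)
      have h2 : (∫ t in (3*δ)..s, f t) = 0 := by
        have hcong : ∀ t ∈ Set.uIcc (3*δ) s, f t = (fun _ : ℝ => (0:ℝ)) t := by
          intro t ht
          rw [Set.uIcc_of_le (by linarith)] at ht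
          exact hone t (le_abs.mpr (Or.inl ht.1))
        rw [intervalIntegral.integral_congr hcong, intervalIntegral.integral_zero]
      rw [← hsplit, h2, add_zero]
      have := intervalIntegral.norm_integral_le_of_norm_le_const (C := 1)
        (f := f) (a := 0) (b := 3*δ) (fun x _ => hbound x)
      rw [Real.norm_eq_abs] at this
      calc |∫ t in (0:ℝ)..(3*δ), f t| ≤ 1 * |3*δ - 0| := this
        _ = 3*δ := by rw [one_mul, sub_zero, abs_of_nonneg (by linarith)]
    · have hsplit := intervalIntegral.integral_add_adjacent_intervals
        (a := (0:ℝ)) (b := -(3*δ)) (c := s) (hfi 0 (-(3*δ))) (hfi (-(3*δ)) s)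
      have h2 : (∫ t in (-(3*δ))..s, f t) = 0 := by
        have hcong : ∀ t ∈ Set.uIcc (-(3*δ)) s, f t = (fun _ : ℝ => (0:ℝ)) t := by
          intro t ht
          rw [Set.uIcc_of_ge (by linarith)] at ht
          exact hone t (le_abs.mpr (Or.inr (by linarith [ht.2])))
        rw [intervalIntegral.integral_congr hcong, intervalIntegral.integral_zero]
      rw [← hsplit, h2, add_zero]
      have := intervalIntegral.norm_integral_le_of_norm_le_const (C := 1)
        (f := f) (a := 0) (b := -(3*δ)) (fun x _ => hbound x)
      rw [Real.norm_eq_abs] at this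
      calc |∫ t in (0:ℝ)..(-(3*δ)), f t| ≤ 1 * |-(3*δ) - 0| := this
        _ = 3*δ := by rw [one_mul, sub_zero, abs_neg, abs_of_nonneg (by linarith)]

theorem fderiv_coord {d : ℕ} (F : (Fin d → ℝ) → (Fin d → ℝ)) {x : Fin d → ℝ}
    (hF : DifferentiableAt ℝ F x) (i : Fin d) (v : Fin d → ℝ) :
    fderiv ℝ (fun y => F y i) x v = (fderiv ℝ F x v) i := by
  have h : HasFDerivAt (fun y => F y i)
      ((ContinuousLinearMap.proj i).comp (fderiv ℝ F x)) x :=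
    (ContinuousLinearMap.proj (R := ℝ) (φ := fun _ : Fin d => ℝ) i).hasFDerivAt.comp x
      hF.hasFDerivAt
  rw [h.fderiv]; rfl

theorem dvg_eq {d : ℕ} (F : (Fin d → ℝ) → (Fin d → ℝ)) {x : Fin d → ℝ}
    (hF : DifferentiableAt ℝ F x) :
    dvg F x = ∑ i, (fderiv ℝ F x (Pi.single i 1)) i :=
  Finset.sum_congr rfl fun i _ => fderiv_coord F hF i _


/-- nonnegativity of ∫ S Φ'(u) under the PDE constraint. -/
theorem stmt17 {d : ℕ} (Ω : Set (Fin d → ℝ)) (hΩopen : IsOpen Ω)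
    (hΩbdd : Bornology.IsBounded Ω)
    (D : (Fin d → ℝ) → Matrix (Fin d) (Fin d) ℝ)
    (S u : (Fin d → ℝ) → ℝ) (Φ : ℝ → ℝ) (c : ℝ)
    (hDsmooth : ∀ i j, ContDiff ℝ (⊤ : ℕ∞) fun x => D x i j)
    (hDsymm : ∀ x, (D x).IsSymm)
    (hDpsd : ∀ x (ξ : Fin d → ℝ), 0 ≤ ξ ⬝ᵥ (D x *ᵥ ξ))
    (hS : ContDiff ℝ (⊤ : ℕ∞) S) (hu : ContDiff ℝ (⊤ : ℕ∞) u) (hΦ : ContDiff ℝ (⊤ : ℕ∞) Φ)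
    (hΦconv : ConvexOn ℝ Set.univ Φ)
    (hΦc : deriv Φ c = 0)
    (hpde : ∀ x ∈ Ω, -dvg (fun y => D y *ᵥ grad u y) x = S x)
    (hbc : ∀ x ∈ frontier Ω, u x = c) :
    0 ≤ ∫ x in Ω, S x * deriv Φ (u x) := by
  classical
  set h : ℝ → ℝ := deriv Φ with hh_def
  have hΦ' : ContDiff ℝ (⊤:ℕ∞) Φ := hΦ.of_le (by simp)
  have hu' : ContDiff ℝ (⊤:ℕ∞) u := hu.of_le (by simp)
  have hS' : ContDiff ℝ (⊤:ℕ∞) S := hS.of_le (by simp)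
  have hh : ContDiff ℝ (⊤:ℕ∞) h := (contDiff_infty_iff_deriv.mp hΦ').2
  -- monotonicity of h and nonnegativity of its derivative
  have hmono : Monotone h := by
    rw [hh_def, ← monotoneOn_univ]
    exact ConvexOn.monotoneOn_deriv hΦconv
      (fun x _ => (hΦ'.differentiable (by simp)).differentiableAt)
  have hh' : ∀ t, 0 ≤ deriv h t := by
    intro t
    have hd : HasDerivAt h (deriv h t) t := ((hh.differentiable (by simp)) t).hasDerivAt
    have hslope := hasDerivAt_iff_tendsto_slope.mp hd
    have hle : nhdsWithin t (Set.Ioi t) ≤ nhdsWithin t {t}ᶜ :=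
      nhdsWithin_mono t (fun y hy => ne_of_gt hy)
    refine ge_of_tendsto (hslope.mono_left hle) ?_
    filter_upwards [self_mem_nhdsWithin] with y hy
    rw [slope_def_field]
    exact div_nonneg (sub_nonneg.mpr (hmono (le_of_lt hy))) (by simp at hy ⊢; linarith)
  -- smoothness of grad u and F
  have hgrad : ContDiff ℝ (⊤:ℕ∞) (grad u) := by
    apply contDiff_pi.mpr
    intro i
    exact (hu'.fderiv_right (m := (⊤:ℕ∞)) (by exact_mod_cast le_top)).clm_apply contDiff_const
  set F : (Fin d → ℝ) → (Fin d → ℝ) := fun y => D y *ᵥ grad u y with hF_def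
  have hF : ContDiff ℝ (⊤:ℕ∞) F := by
    apply contDiff_pi.mpr
    intro i
    have : (fun y => F y i) = fun y => ∑ j, D y i j * grad u y j := by
      funext y; simp [hF_def, Matrix.mulVec, dotProduct]
    rw [this]
    exact ContDiff.sum fun j _ =>
      ((hDsmooth i j).of_le (by simp)).mul ((contDiff_pi.mp hgrad) j)
  have hKcomp : IsCompact (closure Ω) := hΩbdd.isCompact_closure
  have hmeas : MeasurableSet Ω := hΩopen.measurableSet
  -- the key step, for each positive δ
  have hstep : ∀ δ : ℝ, 0 < δ → 0 ≤ ∫ x in Ω, S x * rcut δ (h (u x)) := by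
    intro δ hδ
    set ψ : (Fin d → ℝ) → ℝ := fun x => rcut δ (h (u x)) with hψ_def
    have hψ : ContDiff ℝ (⊤:ℕ∞) ψ := rcut_contDiff.comp (hh.comp hu')
    set V : (Fin d → ℝ) → (Fin d → ℝ) := fun x => ψ x • F x with hV_def
    have hV : ContDiff ℝ (⊤:ℕ∞) V := hψ.smul hF
    set divV : (Fin d → ℝ) → ℝ := fun x => ∑ i, fderiv ℝ V x (Pi.single i 1) i with hdivV_def
    have hdivVcont : Continuous divV := by
      apply continuous_finset_sum
      intro i _
      exact (continuous_apply i).comp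
        (((hV.fderiv_right (m := (⊤:ℕ∞)) (by exact_mod_cast le_top)).clm_apply contDiff_const).continuous)
    set A : (Fin d → ℝ) → ℝ :=
      fun x => qcut δ (h (u x)) * deriv h (u x) * (grad u x ⬝ᵥ F x) with hA_def
    have hAcont : Continuous A := by
      have h1 : Continuous fun x => qcut δ (h (u x)) :=
        (qcut_continuous δ).comp (hh.continuous.comp hu'.continuous)
      have h2 : Continuous fun x => deriv h (u x) :=
        ((contDiff_infty_iff_deriv.mp hh).2.continuous).comp hu'.continuous
      have h3 : Continuous fun x => grad u x ⬝ᵥ F x := by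
        apply continuous_finset_sum
        intro i _
        exact ((continuous_apply i).comp hgrad.continuous).mul
          ((continuous_apply i).comp hF.continuous)
      exact (h1.mul h2).mul h3
    have hA0 : ∀ x, 0 ≤ A x := fun x =>
      mul_nonneg (mul_nonneg (qcut_nonneg _ _) (hh' _)) (hDpsd x (grad u x))
    -- pointwise identity for divV
    have hident : ∀ x, divV x = A x + ψ x * dvg F x := by
      intro x
      have hux : HasFDerivAt u (fderiv ℝ u x) x := ((hu'.differentiable (by simp)) x).hasFDerivAt
      have hhux : HasFDerivAt (fun y => h (u y)) ((deriv h (u x)) • fderiv ℝ u x) x :=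
        (((hh.differentiable (by simp)) (u x)).hasDerivAt).comp_hasFDerivAt x hux
      have hψx : HasFDerivAt ψ
          ((qcut δ (h (u x)) * deriv h (u x)) • fderiv ℝ u x) x := by
        have := (rcut_hasDerivAt (δ := δ) (h (u x))).comp_hasFDerivAt x hhux
        rwa [smul_smul] at this
      have hFx : HasFDerivAt F (fderiv ℝ F x) x := ((hF.differentiable (by simp)) x).hasFDerivAt
      have hVx : HasFDerivAt V
          (ψ x • fderiv ℝ F x +
            (((qcut δ (h (u x)) * deriv h (u x)) • fderiv ℝ u x)).smulRight (F x)) x :=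
        hψx.smul hFx
      have hdvg : dvg F x = ∑ i, (fderiv ℝ F x (Pi.single i 1)) i :=
        dvg_eq F ((hF.differentiable (by simp)) x)
      calc divV x = ∑ i, (ψ x • fderiv ℝ F x +
            (((qcut δ (h (u x)) * deriv h (u x)) • fderiv ℝ u x)).smulRight (F x))
              (Pi.single i 1) i := by rw [hdivV_def]; simp only [hVx.fderiv]
        _ = ∑ i, (ψ x * (fderiv ℝ F x (Pi.single i 1)) i +
              (qcut δ (h (u x)) * deriv h (u x)) * (fderiv ℝ u x (Pi.single i 1) * F x i)) := by
            apply Finset.sum_congr rfl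
            intro i _
            simp [ContinuousLinearMap.add_apply, ContinuousLinearMap.smul_apply,
              ContinuousLinearMap.smulRight_apply, mul_assoc]
        _ = A x + ψ x * dvg F x := by
            rw [Finset.sum_add_distrib, ← Finset.mul_sum, ← Finset.mul_sum, hdvg]
            simp only [hA_def, dotProduct, grad]
            ring
    -- the glued vector field W
    set W : (Fin d → ℝ) → (Fin d → ℝ) := Ω.indicator V with hW_def
    set W' : (Fin d → ℝ) → ((Fin d → ℝ) →L[ℝ] (Fin d → ℝ)) :=
      Ω.indicator (fun x => fderiv ℝ V x) with hW'_def
    set N : Set (Fin d → ℝ) := {y | |h (u y)| < 2*δ} with hN_def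
    have hNopen : IsOpen N :=
      isOpen_lt ((hh.continuous.comp hu'.continuous).abs) continuous_const
    have hWN : ∀ y ∈ N, W y = 0 := by
      intro y hy
      by_cases hyΩ : y ∈ Ω
      · rw [hW_def, Set.indicator_of_mem hyΩ, hV_def]
        show ψ y • F y = 0
        rw [hψ_def]
        show rcut δ (h (u y)) • F y = 0
        rw [rcut_eq_zero hδ (le_of_lt hy), zero_smul]
      · exact Set.indicator_of_notMem hyΩ V
    have hWd : ∀ x, HasFDerivAt W (W' x) x := by
      intro x
      by_cases hx : x ∈ Ω
      · rw [hW'_def, Set.indicator_of_mem hx]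
        refine ((hV.differentiable (by simp) x).hasFDerivAt).congr_of_eventuallyEq ?_
        filter_upwards [hΩopen.mem_nhds hx] with y hy
        rw [hW_def, Set.indicator_of_mem hy]
      · rw [hW'_def, Set.indicator_of_notMem hx]
        by_cases hx2 : x ∈ closure Ω
        · have hxf : x ∈ frontier Ω := ⟨hx2, by rwa [hΩopen.interior_eq]⟩
          have hxN : x ∈ N := by
            rw [hN_def]
            show |h (u x)| < 2*δ
            rw [hbc x hxf, hΦc, abs_zero]
            linarith
          exact (hasFDerivAt_const (0 : Fin d → ℝ) x).congr_of_eventuallyEq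
            (Filter.eventuallyEq_of_mem (hNopen.mem_nhds hxN) hWN)
        · have hopen : IsOpen (closure Ω)ᶜ := isClosed_closure.isOpen_compl
          refine (hasFDerivAt_const (0 : Fin d → ℝ) x).congr_of_eventuallyEq
            (Filter.eventuallyEq_of_mem (hopen.mem_nhds hx2) ?_)
          intro y hy
          exact Set.indicator_of_notMem (fun hmem => hy (subset_closure hmem)) V
    have hsupp : ∀ x ∉ closure Ω, W x = 0 := fun x hx =>
      Set.indicator_of_notMem (fun hmem => hx (subset_closure hmem)) V
    have hdivW : (fun x => ∑ i, W' x (Pi.single i 1) i) = Ω.indicator divV := by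
      funext x
      by_cases hx : x ∈ Ω
      · rw [hW'_def, Set.indicator_of_mem hx, Set.indicator_of_mem hx, hdivV_def]
      · rw [hW'_def, Set.indicator_of_notMem hx, Set.indicator_of_notMem hx]
        simp
    have hdivVint : IntegrableOn divV Ω :=
      (hdivVcont.continuousOn.integrableOn_compact hKcomp).mono_set subset_closure
    have hWint : Integrable (fun x => ∑ i, W' x (Pi.single i 1) i) := by
      rw [hdivW]
      exact (integrable_indicator_iff hmeas).mpr hdivVint
    have hzero : ∫ x in Ω, divV x = 0 := by
      have := div_integral_zero W W' hWd hKcomp hsupp hWint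
      rw [hdivW, MeasureTheory.integral_indicator hmeas] at this
      exact this
    -- integrability of the pieces
    have hSψcont : Continuous fun x => S x * ψ x :=
      hS'.continuous.mul ((rcut_contDiff.continuous).comp (hh.continuous.comp hu'.continuous))
    have hSψint : IntegrableOn (fun x => S x * ψ x) Ω :=
      (hSψcont.continuousOn.integrableOn_compact hKcomp).mono_set subset_closure
    have hAint : IntegrableOn A Ω :=
      (hAcont.continuousOn.integrableOn_compact hKcomp).mono_set subset_closure
    have hkey : ∫ x in Ω, S x * ψ x = ∫ x in Ω, (A x - divV x) := by
      apply setIntegral_congr_fun hmeas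
      intro x hx
      show S x * ψ x = A x - divV x
      have hdvgF : dvg F x = -S x := by
        have := hpde x hx
        rw [hF_def]
        linarith [this]
      rw [hident x, hdvgF]
      ring
    rw [hkey, integral_sub hAint hdivVint, hzero, sub_zero]
    exact setIntegral_nonneg hmeas fun x _ => hA0 x
  -- pass to the limit δ → 0
  have hbound_cont : Continuous fun x => |S x| * |h (u x)| :=
    (hS'.continuous.abs).mul ((hh.continuous.comp hu'.continuous).abs)
  have hbound_int : IntegrableOn (fun x => |S x| * |h (u x)|) Ω :=
    (hbound_cont.continuousOn.integrableOn_compact hKcomp).mono_set subset_closure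
  have hδn : ∀ n : ℕ, (0:ℝ) < 1/(n+1) := fun n => by positivity
  have htend : Filter.Tendsto (fun n : ℕ => ∫ x in Ω, S x * rcut (1/(n+1)) (h (u x)))
      Filter.atTop (nhds (∫ x in Ω, S x * h (u x))) := by
    apply MeasureTheory.tendsto_integral_of_dominated_convergence
      (fun x => |S x| * |h (u x)|)
    · intro n
      exact (hS'.continuous.mul ((rcut_contDiff.continuous).comp
        (hh.continuous.comp hu'.continuous))).aestronglyMeasurable
    · exact hbound_int
    · intro n
      apply Filter.Eventually.of_forall
      intro x
      rw [Real.norm_eq_abs, abs_mul]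
      exact mul_le_mul_of_nonneg_left (abs_rcut_le (hδn n) _) (abs_nonneg _)
    · apply Filter.Eventually.of_forall
      intro x
      rw [tendsto_iff_dist_tendsto_zero]
      apply squeeze_zero (fun n => dist_nonneg)
        (g := fun n : ℕ => |S x| * (3 * (1/(n+1))))
      · intro n
        rw [Real.dist_eq, ← mul_sub, abs_mul]
        exact mul_le_mul_of_nonneg_left (abs_rcut_sub_le (hδn n) _) (abs_nonneg _)
      · have := tendsto_one_div_add_atTop_nhds_zero_nat.const_mul (|S x| * 3)
        simp only [mul_zero] at this
        convert this using 2 with n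
        · ring
  exact ge_of_tendsto htend (Filter.Eventually.of_forall fun n => hstep _ (hδn n))
end
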